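/- Let n ≥ 2. The following conjugation rules hold in UVB_n: (1) for 1 ≤ i < j ≤ n and any k with k < i−1, or i < k < j−1, or k > j: ρ_k λ_{i,j} ρ_k = λ_{i,j} and ρ_k λ_{j,i} ρ_k = λ_{j,i}; (2) for 1 < i < j ≤ n: ρ_{i−1} λ_{i,j} ρ_{i−1} = λ_{i−1,j} and ρ_{i−1} λ_{j,i} ρ_{i−1} = λ_{j,i−1}; (3) for 1 ≤ i < j ≤ n: ρ_i λ_{i,i+1} ρ_i = λ_{i+1,i}, ρ_i λ_{i+1,i} ρ_i = λ_{i,i+1}, and if i < j−1 also ρ_i λ_{i,j} ρ_i = λ_{i+1,j} and ρ_i λ_{j,i} ρ_i = λ_{j,i+1}; (4) for 1 ≤ i+1 < j ≤ n: ρ_{j−1} λ_{i,j} ρ_{j−1} = λ_{i,j−1} and ρ_{j−1} λ_{j,i} ρ_{j−1} = λ_{j−1,i}; (5) for 1 ≤ i < j < n: ρ_j λ_{i,j} ρ_j = λ_{i,j+1} and ρ_j λ_{j,i} ρ_j = λ_{j+1,i}. -/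

import Mathlib

/-!  Common setup: the unrestricted virtual braid group `UVB n`, its generators
σ_k, ρ_k (1-based indices), the elements λ_{i,j} and B_{i,j}, the permutation
homomorphism ι (characterized by `IsIota`), the section s : S_n → UVB n
(characterized by `IsPermSection`), and fused Markov equivalence. -/

/-- Generators of the unrestricted virtual braid group `UVB n`:
`Sum.inl i` is the classical generator σ_{i+1} and `Sum.inr i` is the virtual
generator ρ_{i+1}, for `i : Fin (n-1)` (so the 1-based indices are `1, …, n-1`). -/
abbrev UVBGen (n : ℕ) := Sum (Fin (n - 1)) (Fin (n - 1))

namespace UVBGen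
def sg {n : ℕ} (i : Fin (n - 1)) : FreeGroup (UVBGen n) := FreeGroup.of (Sum.inl i)
def rg {n : ℕ} (i : Fin (n - 1)) : FreeGroup (UVBGen n) := FreeGroup.of (Sum.inr i)
end UVBGen

open UVBGen in
/-- The defining relations of the unrestricted virtual braid group. -/
def uvbRels (n : ℕ) : Set (FreeGroup (UVBGen n)) :=
  {r | (∃ i j : Fin (n - 1), (j : ℕ) = (i : ℕ) + 1 ∧
          (r = sg i * sg j * sg i * (sg j * sg i * sg j)⁻¹ ∨
           r = rg i * rg j * rg i * (rg j * rg i * rg j)⁻¹ ∨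
           r = rg i * rg j * sg i * (sg j * rg i * rg j)⁻¹ ∨
           r = rg i * sg j * sg i * (sg j * sg i * rg j)⁻¹ ∨
           r = rg j * sg i * sg j * (sg i * sg j * rg i)⁻¹)) ∨
       (∃ i j : Fin (n - 1), ((i : ℕ) + 2 ≤ (j : ℕ) ∨ (j : ℕ) + 2 ≤ (i : ℕ)) ∧
          (r = sg i * sg j * (sg j * sg i)⁻¹ ∨
           r = rg i * rg j * (rg j * rg i)⁻¹ ∨
           r = sg i * rg j * (rg j * sg i)⁻¹)) ∨
       (∃ i : Fin (n - 1), r = rg i * rg i)}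

/-- The unrestricted virtual braid group on `n` strands. -/
abbrev UVB (n : ℕ) := PresentedGroup (uvbRels n)

namespace UVB

/-- The generator σ_k (1-based index; meaningful for `1 ≤ k ≤ n-1`, junk value `1` otherwise). -/
def sigma (n k : ℕ) : UVB n :=
  if h : 1 ≤ k ∧ k ≤ n - 1 then PresentedGroup.of (Sum.inl ⟨k - 1, by omega⟩) else 1

/-- The generator ρ_k (1-based index; meaningful for `1 ≤ k ≤ n-1`, junk value `1` otherwise). -/
def rho (n k : ℕ) : UVB n :=
  if h : 1 ≤ k ∧ k ≤ n - 1 then PresentedGroup.of (Sum.inr ⟨k - 1, by omega⟩) else 1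

/-- The element λ_{i,j} of `UVB n` (1-based indices `1 ≤ i ≠ j ≤ n`; junk value `1` if `i = j`).
For `i < j`:  `λ_{i,j} = ρ_{j-1}⋯ρ_{i+1} · ρ_i σ_i⁻¹ · ρ_{i+1}⋯ρ_{j-1}` and
`λ_{j,i} = ρ_{j-1}⋯ρ_{i+1} · σ_i⁻¹ ρ_i · ρ_{i+1}⋯ρ_{j-1}`. -/
def lam (n i j : ℕ) : UVB n :=
  if i < j then
    (((List.range' (i + 1) (j - 1 - i)).reverse.map (rho n)).prod) *
      (rho n i * (sigma n i)⁻¹) *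
      (((List.range' (i + 1) (j - 1 - i)).map (rho n)).prod)
  else if j < i then
    (((List.range' (j + 1) (i - 1 - j)).reverse.map (rho n)).prod) *
      ((sigma n j)⁻¹ * rho n j) *
      (((List.range' (j + 1) (i - 1 - j)).map (rho n)).prod)
  else 1

/-- The element `B_{i,j} = ρ_{j-1}ρ_{j-2}⋯ρ_{i+1}ρ_i` for `i < j`, and `1` otherwise. -/
def B (n i j : ℕ) : UVB n :=
  if i < j then ((List.range' i (j - i)).reverse.map (rho n)).prod else 1

/-- The subgroup `U_j` of `UVB n` generated by `{λ_{i,j}, λ_{j,i} : 1 ≤ i < j}`. -/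
def U (n j : ℕ) : Subgroup (UVB n) :=
  Subgroup.closure {x | ∃ i, 1 ≤ i ∧ i < j ∧ (x = lam n i j ∨ x = lam n j i)}

end UVB

/-- `ι : UVB n →* S_n` is the homomorphism sending σ_k and ρ_k to the
transposition (k, k+1) (written 0-based on `Fin n`). -/
def IsIota (n : ℕ) (ι : UVB n →* Equiv.Perm (Fin n)) : Prop :=
  ∀ (k : ℕ) (h1 : 1 ≤ k) (h2 : k ≤ n - 1),
    ι (UVB.sigma n k) = Equiv.swap ⟨k - 1, by omega⟩ ⟨k, by omega⟩ ∧
    ι (UVB.rho n k) = Equiv.swap ⟨k - 1, by omega⟩ ⟨k, by omega⟩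

/-- `s : S_n →* UVB n` is the homomorphism sending the transposition (k, k+1) to ρ_k. -/
def IsPermSection (n : ℕ) (s : Equiv.Perm (Fin n) →* UVB n) : Prop :=
  ∀ (k : ℕ) (h1 : 1 ≤ k) (h2 : k ≤ n - 1),
    s (Equiv.swap ⟨k - 1, by omega⟩ ⟨k, by omega⟩) = UVB.rho n k

/-- The number of orbits of a permutation of `Fin n`
(= number of fixed points + number of nontrivial cycles). -/
def numOrbits {n : ℕ} (π : Equiv.Perm (Fin n)) : ℕ :=
  (Finset.univ.filter fun x => π x = x).card + π.cycleType.card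

namespace UVB

private def embedGen (n : ℕ) : UVBGen n → UVBGen (n + 1)
  | Sum.inl i => Sum.inl ⟨i.val, by have := i.isLt; omega⟩
  | Sum.inr i => Sum.inr ⟨i.val, by have := i.isLt; omega⟩

open UVBGen in
/-- The natural inclusion `UVB n →* UVB (n+1)` (σ_k ↦ σ_k, ρ_k ↦ ρ_k). -/
def incl (n : ℕ) : UVB n →* UVB (n + 1) :=
  PresentedGroup.toGroup (f := fun x => PresentedGroup.of (embedGen n x)) (by
    have key : (FreeGroup.lift fun x => (PresentedGroup.of (embedGen n x) : UVB (n + 1)))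
        = (PresentedGroup.mk (uvbRels (n + 1))).comp (FreeGroup.map (embedGen n)) := by
      ext x
      simp [PresentedGroup.of]
    intro r hr
    rw [key]
    simp only [MonoidHom.comp_apply]
    have hmem : FreeGroup.map (embedGen n) r ∈ uvbRels (n + 1) := by
      have hsg : ∀ i : Fin (n - 1), FreeGroup.map (embedGen n) (sg i)
          = sg (⟨i.val, by have := i.isLt; omega⟩ : Fin (n + 1 - 1)) := by
        intro i; simp [sg, embedGen]
      have hrg : ∀ i : Fin (n - 1), FreeGroup.map (embedGen n) (rg i)
          = rg (⟨i.val, by have := i.isLt; omega⟩ : Fin (n + 1 - 1)) := by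
        intro i; simp [rg, embedGen]
      rcases hr with ⟨i, j, hij, hc⟩ | ⟨i, j, hij, hc⟩ | ⟨i, hc⟩
      · refine Or.inl ⟨⟨i.val, by have := i.isLt; omega⟩, ⟨j.val, by have := j.isLt; omega⟩,
          by simpa using hij, ?_⟩
        rcases hc with h | h | h | h | h <;> subst h <;>
          simp only [map_mul, map_inv, hsg, hrg] <;> tauto
      · refine Or.inr (Or.inl ⟨⟨i.val, by have := i.isLt; omega⟩, ⟨j.val, by have := j.isLt; omega⟩,
          by simpa using hij, ?_⟩)
        rcases hc with h | h | h <;> subst h <;>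
          simp only [map_mul, map_inv, hsg, hrg] <;> tauto
      · refine Or.inr (Or.inr ⟨⟨i.val, by have := i.isLt; omega⟩, ?_⟩)
        subst hc
        simp only [map_mul, hsg, hrg]
    exact (QuotientGroup.eq_one_iff _).mpr (Subgroup.subset_normalClosure hmem))

end UVB

/-- The elementary fused Markov moves on the disjoint union of the groups `UVB n`:
conjugation, and the three right stabilizations (positive, negative, virtual). -/
inductive MarkovBase : (Σ n, UVB n) → (Σ n, UVB n) → Prop
  | conj (n : ℕ) (α γ : UVB n) : MarkovBase ⟨n, α⟩ ⟨n, γ * α * γ⁻¹⟩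
  | stabPos (n : ℕ) (α : UVB n) :
      MarkovBase ⟨n, α⟩ ⟨n + 1, UVB.incl n α * UVB.sigma (n + 1) n⟩
  | stabNeg (n : ℕ) (α : UVB n) :
      MarkovBase ⟨n, α⟩ ⟨n + 1, UVB.incl n α * (UVB.sigma (n + 1) n)⁻¹⟩
  | stabVirt (n : ℕ) (α : UVB n) :
      MarkovBase ⟨n, α⟩ ⟨n + 1, UVB.incl n α * UVB.rho (n + 1) n⟩

/-- Fused Markov equivalence: the smallest equivalence relation generated by the
elementary Markov moves.  By Kamada's theorem, two unrestricted virtual braids are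
fused Markov equivalent iff their closures are equivalent fused links. -/
def Markov : (Σ n, UVB n) → (Σ n, UVB n) → Prop := Relation.EqvGen MarkovBase

/-! `λ_{i,j}` and `λ_{j,i}` are the conjugates of `λ_{i,i+1} = ρ_i σ_i⁻¹` and
`λ_{i+1,i} = σ_i⁻¹ ρ_i` by `B_{i+1,j} = ρ_{j-1} ⋯ ρ_{i+1}`. Conjugating them by the involution `ρ_k`
therefore amounts to moving `ρ_k` through `B_{i+1,j}`: it commutes with `B_{i+1,j}` when `k` is far
from `[i+1, j-1]`, it comes out as `ρ_{k+1}` when `k` lies inside (braid relation), and at the two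
ends it lengthens or shortens `B_{i+1,j}`. The only mixed relation needed is that conjugation by
`ρ_i ρ_{i+1}` sends `ρ_i, σ_i` to `ρ_{i+1}, σ_{i+1}`. Rules (2) and (4) are rules (3) and (5) read
backwards. -/

namespace UVB

open UVBGen

variable {n : ℕ}

theorem rho_of {k : ℕ} (hk : 1 ≤ k) (hkn : k ≤ n - 1) :
    rho n k = PresentedGroup.mk (uvbRels n) (rg ⟨k - 1, by omega⟩) := by
  rw [rho, dif_pos ⟨hk, hkn⟩]; rfl

theorem sigma_of {k : ℕ} (hk : 1 ≤ k) (hkn : k ≤ n - 1) :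
    sigma n k = PresentedGroup.mk (uvbRels n) (sg ⟨k - 1, by omega⟩) := by
  rw [sigma, dif_pos ⟨hk, hkn⟩]; rfl

theorem rho_mul_self (k : ℕ) : rho n k * rho n k = 1 := by
  by_cases hk : 1 ≤ k ∧ k ≤ n - 1
  · rw [rho_of hk.1 hk.2, ← map_mul]
    exact PresentedGroup.one_of_mem (Or.inr (Or.inr ⟨_, rfl⟩))
  · rw [rho, dif_neg hk, one_mul]

theorem rho_inv (k : ℕ) : (rho n k)⁻¹ = rho n k :=
  inv_eq_of_mul_eq_one_right (rho_mul_self k)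

theorem rho_conj_rho_conj (k : ℕ) (x : UVB n) :
    rho n k * (rho n k * x * rho n k) * rho n k = x := by
  simp only [← mul_assoc, rho_mul_self, one_mul]
  rw [mul_assoc, rho_mul_self, mul_one]

theorem rho_mul_mul_rho (k : ℕ) (x : UVB n) :
    rho n k * x * rho n k = MulAut.conj (rho n k) x := by
  rw [MulAut.conj_apply, rho_inv]

theorem rho_braid {k : ℕ} (hk : 1 ≤ k) (hkn : k + 1 ≤ n - 1) :
    rho n k * rho n (k + 1) * rho n k = rho n (k + 1) * rho n k * rho n (k + 1) := by
  rw [rho_of hk (by omega), rho_of (by omega) hkn]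
  simp only [← map_mul]
  exact PresentedGroup.mk_eq_mk_of_mul_inv_mem
    (Or.inl ⟨⟨k - 1, by omega⟩, ⟨k, by omega⟩, by simp; omega, Or.inr (Or.inl rfl)⟩)

theorem rho_rho_sigma {k : ℕ} (hk : 1 ≤ k) (hkn : k + 1 ≤ n - 1) :
    rho n k * rho n (k + 1) * sigma n k = sigma n (k + 1) * rho n k * rho n (k + 1) := by
  rw [rho_of hk (by omega), rho_of (by omega) hkn, sigma_of hk (by omega), sigma_of (by omega) hkn]
  simp only [← map_mul]
  exact PresentedGroup.mk_eq_mk_of_mul_inv_mem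
    (Or.inl ⟨⟨k - 1, by omega⟩, ⟨k, by omega⟩, by simp; omega, Or.inr (Or.inr (Or.inl rfl))⟩)

-- No range hypotheses: an out-of-range generator is the junk value `1`.
theorem commute_rho_rho {k l : ℕ} (h : k + 2 ≤ l ∨ l + 2 ≤ k) :
    Commute (rho n k) (rho n l) := by
  by_cases hk : 1 ≤ k ∧ k ≤ n - 1
  · by_cases hl : 1 ≤ l ∧ l ≤ n - 1
    · show rho n k * rho n l = rho n l * rho n k
      rw [rho_of hk.1 hk.2, rho_of hl.1 hl.2, ← map_mul, ← map_mul]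
      exact PresentedGroup.mk_eq_mk_of_mul_inv_mem
        (Or.inr (Or.inl ⟨_, _, by simp; omega, Or.inr (Or.inl rfl)⟩))
    · rw [show rho n l = 1 from dif_neg hl]; exact Commute.one_right _
  · rw [show rho n k = 1 from dif_neg hk]; exact Commute.one_left _

theorem commute_rho_sigma {k l : ℕ} (h : k + 2 ≤ l ∨ l + 2 ≤ k) :
    Commute (rho n k) (sigma n l) := by
  by_cases hk : 1 ≤ k ∧ k ≤ n - 1
  · by_cases hl : 1 ≤ l ∧ l ≤ n - 1
    · show rho n k * sigma n l = sigma n l * rho n k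
      rw [rho_of hk.1 hk.2, sigma_of hl.1 hl.2, ← map_mul, ← map_mul]
      refine (PresentedGroup.mk_eq_mk_of_mul_inv_mem
        (Or.inr (Or.inl ⟨_, _, by simp; omega, Or.inr (Or.inr rfl)⟩))).symm
    · rw [show sigma n l = 1 from dif_neg hl]; exact Commute.one_right _
  · rw [show rho n k = 1 from dif_neg hk]; exact Commute.one_left _

theorem B_eq_prod {a b : ℕ} (h : a ≤ b) :
    B n a b = ((List.range' a (b - a)).reverse.map (rho n)).prod := by
  unfold B
  split_ifs with hab
  · rfl
  · simp [show b - a = 0 by omega]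

theorem B_succ_right {a b : ℕ} (h : a ≤ b) : B n a (b + 1) = rho n b * B n a b := by
  rw [B_eq_prod h, B_eq_prod (by omega), show b + 1 - a = b - a + 1 by omega, List.range'_concat]
  simp [show a + (b - a) = b by omega]

theorem B_succ_left {a b : ℕ} (h : a < b) : B n a b = B n (a + 1) b * rho n a := by
  rw [B_eq_prod h.le, B_eq_prod h, show b - a = b - (a + 1) + 1 by omega, List.range'_succ]
  simp

theorem commute_rho_B {k a b : ℕ} (h : k + 1 < a ∨ b < k) : Commute (rho n k) (B n a b) := by
  unfold B
  split_ifs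
  · refine Commute.list_prod_right _ _ fun x hx => ?_
    simp only [List.mem_map, List.mem_reverse, List.mem_range'_1] at hx
    obtain ⟨m, hm, rfl⟩ := hx
    exact commute_rho_rho (by omega)
  · exact Commute.one_right _

theorem rho_mul_B {k a b : ℕ} (hk : 1 ≤ k) (hak : a ≤ k) (hkb : k + 1 < b) (hbn : b ≤ n) :
    rho n k * B n a b = B n a b * rho n (k + 1) := by
  induction b, hkb using Nat.le_induction with
  | base =>
    rw [B_succ_right (by omega), B_succ_right hak]
    calc rho n k * (rho n (k + 1) * (rho n k * B n a k))
        = rho n k * rho n (k + 1) * rho n k * B n a k := by group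
      _ = rho n (k + 1) * rho n k * (rho n (k + 1) * B n a k) := by
          rw [rho_braid hk (by omega)]; group
      _ = rho n (k + 1) * (rho n k * B n a k) * rho n (k + 1) := by
          rw [(commute_rho_B (by omega)).eq]; group
  | succ b hb ih =>
    rw [B_succ_right (by omega), ← mul_assoc, (commute_rho_rho (by omega)).eq, mul_assoc,
      ih (by omega), mul_assoc]

theorem lam_self_succ (i : ℕ) : lam n i (i + 1) = rho n i * (sigma n i)⁻¹ := by
  simp [lam]

theorem lam_succ_self (i : ℕ) : lam n (i + 1) i = (sigma n i)⁻¹ * rho n i := by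
  simp [lam]

theorem prod_reverse_map_rho_inv (l : List ℕ) :
    ((l.reverse.map (rho n)).prod)⁻¹ = (l.map (rho n)).prod := by
  rw [List.prod_inv_reverse, List.map_map, List.map_reverse, List.reverse_reverse]
  simp only [Function.comp_def, rho_inv]

theorem lam_eq_conj_B {i j : ℕ} (h : i < j) :
    lam n i j = MulAut.conj (B n (i + 1) j) (lam n i (i + 1)) := by
  rw [MulAut.conj_apply, lam, if_pos h, lam_self_succ, B_eq_prod h,
    show j - (i + 1) = j - 1 - i by omega, prod_reverse_map_rho_inv]

theorem lam_eq_conj_B' {i j : ℕ} (h : i < j) :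
    lam n j i = MulAut.conj (B n (i + 1) j) (lam n (i + 1) i) := by
  rw [MulAut.conj_apply, lam, if_neg (by omega), if_pos h, lam_succ_self, B_eq_prod h,
    show j - (i + 1) = j - 1 - i by omega, prod_reverse_map_rho_inv]

theorem commute_rho_lam_succ {k i : ℕ} (h : k + 2 ≤ i ∨ i + 2 ≤ k) :
    Commute (rho n k) (lam n i (i + 1)) ∧ Commute (rho n k) (lam n (i + 1) i) := by
  rw [lam_self_succ, lam_succ_self]
  exact ⟨(commute_rho_rho h).mul_right (commute_rho_sigma h).inv_right,
    (commute_rho_sigma h).inv_right.mul_right (commute_rho_rho h)⟩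

theorem rho_rho_conj_lam_succ {i : ℕ} (hi : 1 ≤ i) (hin : i + 1 ≤ n - 1) :
    MulAut.conj (rho n i * rho n (i + 1)) (lam n i (i + 1)) = lam n (i + 1) (i + 1 + 1) ∧
    MulAut.conj (rho n i * rho n (i + 1)) (lam n (i + 1) i) = lam n (i + 1 + 1) (i + 1) := by
  have hρ : MulAut.conj (rho n i * rho n (i + 1)) (rho n i) = rho n (i + 1) := by
    rw [MulAut.conj_apply, mul_inv_eq_iff_eq_mul, rho_braid hi hin, mul_assoc]
  have hσ : MulAut.conj (rho n i * rho n (i + 1)) (sigma n i) = sigma n (i + 1) := by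
    rw [MulAut.conj_apply, mul_inv_eq_iff_eq_mul, rho_rho_sigma hi hin, mul_assoc]
  simp only [lam_self_succ, lam_succ_self, map_mul (MulAut.conj (rho n i * rho n (i + 1))),
    map_inv, hρ, hσ, and_self]

theorem rho_conj_lam_self_succ (i : ℕ) :
    rho n i * lam n i (i + 1) * rho n i = lam n (i + 1) i ∧
    rho n i * lam n (i + 1) i * rho n i = lam n i (i + 1) := by
  rw [lam_self_succ, lam_succ_self]
  constructor
  · simp only [← mul_assoc, rho_mul_self, one_mul]
  · simp only [mul_assoc, rho_mul_self, mul_one]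

theorem rho_conj_lam_eq_self_of_mul_B_eq {i j k l : ℕ} (hij : i < j)
    (hB : rho n k * B n (i + 1) j = B n (i + 1) j * rho n l) (hl : l + 2 ≤ i ∨ i + 2 ≤ l) :
    rho n k * lam n i j * rho n k = lam n i j ∧ rho n k * lam n j i * rho n k = lam n j i := by
  have key : ∀ x, Commute (rho n l) x →
      MulAut.conj (rho n k) (MulAut.conj (B n (i + 1) j) x) = MulAut.conj (B n (i + 1) j) x := by
    intro x hx
    rw [← MulAut.mul_apply, ← map_mul, hB, map_mul, MulAut.mul_apply, MulAut.conj_apply (rho n l),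
      hx.mul_inv_cancel]
  obtain ⟨h₁, h₂⟩ := commute_rho_lam_succ (n := n) hl
  rw [rho_mul_mul_rho, rho_mul_mul_rho, lam_eq_conj_B hij, lam_eq_conj_B' hij]
  exact ⟨key _ h₁, key _ h₂⟩

theorem rho_conj_lam_left {i j : ℕ} (hi : 1 ≤ i) (hij : i + 1 < j) (hjn : j ≤ n) :
    rho n i * lam n i j * rho n i = lam n (i + 1) j ∧
    rho n i * lam n j i * rho n i = lam n j (i + 1) := by
  have hB : rho n i * B n (i + 1 + 1) j = B n (i + 1 + 1) j * rho n i :=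
    (commute_rho_B (by omega)).eq
  have key : ∀ x, MulAut.conj (rho n i) (MulAut.conj (B n (i + 1) j) x)
      = MulAut.conj (B n (i + 1 + 1) j) (MulAut.conj (rho n i * rho n (i + 1)) x) := by
    intro x
    rw [B_succ_left hij, ← MulAut.mul_apply, ← map_mul, ← mul_assoc, hB, mul_assoc, map_mul,
      MulAut.mul_apply]
  obtain ⟨h₁, h₂⟩ := rho_rho_conj_lam_succ (n := n) hi (by omega)
  rw [rho_mul_mul_rho, rho_mul_mul_rho, lam_eq_conj_B (by omega : i < j),
    lam_eq_conj_B' (by omega : i < j), key, key, h₁, h₂, ← lam_eq_conj_B hij,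
    ← lam_eq_conj_B' hij]
  exact ⟨rfl, rfl⟩

theorem rho_conj_lam_right {i j : ℕ} (hij : i < j) :
    rho n j * lam n i j * rho n j = lam n i (j + 1) ∧
    rho n j * lam n j i * rho n j = lam n (j + 1) i := by
  have key : ∀ x, MulAut.conj (rho n j) (MulAut.conj (B n (i + 1) j) x)
      = MulAut.conj (B n (i + 1) (j + 1)) x := by
    intro x
    rw [B_succ_right hij, map_mul, MulAut.mul_apply]
  rw [rho_mul_mul_rho, rho_mul_mul_rho, lam_eq_conj_B hij, lam_eq_conj_B' hij, key, key,
    ← lam_eq_conj_B (by omega : i < j + 1), ← lam_eq_conj_B' (by omega : i < j + 1)]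
  exact ⟨rfl, rfl⟩

end UVB

open UVB

theorem statement4_general (n : ℕ) :
    (∀ i j k : ℕ, 1 ≤ i → i < j → j ≤ n → 1 ≤ k → k ≤ n - 1 →
        (k < i - 1 ∨ (i < k ∧ k < j - 1) ∨ j < k) →
        UVB.rho n k * UVB.lam n i j * UVB.rho n k = UVB.lam n i j ∧
        UVB.rho n k * UVB.lam n j i * UVB.rho n k = UVB.lam n j i) ∧
    (∀ i j : ℕ, 1 < i → i < j → j ≤ n →
        UVB.rho n (i - 1) * UVB.lam n i j * UVB.rho n (i - 1) = UVB.lam n (i - 1) j ∧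
        UVB.rho n (i - 1) * UVB.lam n j i * UVB.rho n (i - 1) = UVB.lam n j (i - 1)) ∧
    (∀ i j : ℕ, 1 ≤ i → i < j → j ≤ n →
        (UVB.rho n i * UVB.lam n i (i + 1) * UVB.rho n i = UVB.lam n (i + 1) i ∧
         UVB.rho n i * UVB.lam n (i + 1) i * UVB.rho n i = UVB.lam n i (i + 1)) ∧
        (i < j - 1 →
         UVB.rho n i * UVB.lam n i j * UVB.rho n i = UVB.lam n (i + 1) j ∧
         UVB.rho n i * UVB.lam n j i * UVB.rho n i = UVB.lam n j (i + 1))) ∧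
    (∀ i j : ℕ, 1 ≤ i → i + 1 < j → j ≤ n →
        UVB.rho n (j - 1) * UVB.lam n i j * UVB.rho n (j - 1) = UVB.lam n i (j - 1) ∧
        UVB.rho n (j - 1) * UVB.lam n j i * UVB.rho n (j - 1) = UVB.lam n (j - 1) i) ∧
    (∀ i j : ℕ, 1 ≤ i → i < j → j < n →
        UVB.rho n j * UVB.lam n i j * UVB.rho n j = UVB.lam n i (j + 1) ∧
        UVB.rho n j * UVB.lam n j i * UVB.rho n j = UVB.lam n (j + 1) i) := by
  refine ⟨?_, ?_, ?_, ?_, ?_⟩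
  · intro i j k hi hij hjn hk hkn hk_range
    rcases hk_range with hki | ⟨hik, hkj⟩ | hjk
    · exact rho_conj_lam_eq_self_of_mul_B_eq hij (commute_rho_B (by omega)).eq (by omega)
    · exact rho_conj_lam_eq_self_of_mul_B_eq hij (rho_mul_B hk (by omega) (by omega) hjn) (by omega)
    · exact rho_conj_lam_eq_self_of_mul_B_eq hij (commute_rho_B (by omega)).eq (by omega)
  · intro i j hi hij hjn
    obtain ⟨h₁, h₂⟩ := rho_conj_lam_left (n := n) (i := i - 1) (by omega) (by omega) hjn
    rw [Nat.sub_add_cancel hi.le] at h₁ h₂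
    exact ⟨by rw [← h₁, rho_conj_rho_conj], by rw [← h₂, rho_conj_rho_conj]⟩
  · intro i j hi hij hjn
    exact ⟨rho_conj_lam_self_succ i, fun hij' => rho_conj_lam_left hi (by omega) hjn⟩
  · intro i j hi hij hjn
    obtain ⟨h₁, h₂⟩ := rho_conj_lam_right (n := n) (i := i) (j := j - 1) (by omega)
    rw [Nat.sub_add_cancel (by omega : 1 ≤ j)] at h₁ h₂
    exact ⟨by rw [← h₁, rho_conj_rho_conj], by rw [← h₂, rho_conj_rho_conj]⟩
  · intro i j hi hij hjn
    exact rho_conj_lam_right hij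

/-- conjugation rules, Lemma 1 of the paper.  For `n ≥ 2`, in `UVB n`:
(1) ρ_k λ_{i,j} ρ_k = λ_{i,j} and ρ_k λ_{j,i} ρ_k = λ_{j,i} for 1 ≤ i < j ≤ n and
k < i−1 or i < k < j−1 or k > j;
(2) ρ_{i−1} λ_{i,j} ρ_{i−1} = λ_{i−1,j}, ρ_{i−1} λ_{j,i} ρ_{i−1} = λ_{j,i−1} for 1 < i < j ≤ n;
(3) ρ_i λ_{i,i+1} ρ_i = λ_{i+1,i}, ρ_i λ_{i+1,i} ρ_i = λ_{i,i+1}, and for i < j−1 also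
ρ_i λ_{i,j} ρ_i = λ_{i+1,j}, ρ_i λ_{j,i} ρ_i = λ_{j,i+1};
(4) ρ_{j−1} λ_{i,j} ρ_{j−1} = λ_{i,j−1}, ρ_{j−1} λ_{j,i} ρ_{j−1} = λ_{j−1,i} for i+1 < j ≤ n;
(5) ρ_j λ_{i,j} ρ_j = λ_{i,j+1}, ρ_j λ_{j,i} ρ_j = λ_{j+1,i} for 1 ≤ i < j < n. -/
theorem statement4 (n : ℕ) (hn : 2 ≤ n) :
    (∀ i j k : ℕ, 1 ≤ i → i < j → j ≤ n → 1 ≤ k → k ≤ n - 1 →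
        (k < i - 1 ∨ (i < k ∧ k < j - 1) ∨ j < k) →
        UVB.rho n k * UVB.lam n i j * UVB.rho n k = UVB.lam n i j ∧
        UVB.rho n k * UVB.lam n j i * UVB.rho n k = UVB.lam n j i) ∧
    (∀ i j : ℕ, 1 < i → i < j → j ≤ n →
        UVB.rho n (i - 1) * UVB.lam n i j * UVB.rho n (i - 1) = UVB.lam n (i - 1) j ∧
        UVB.rho n (i - 1) * UVB.lam n j i * UVB.rho n (i - 1) = UVB.lam n j (i - 1)) ∧
    (∀ i j : ℕ, 1 ≤ i → i < j → j ≤ n →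
        (UVB.rho n i * UVB.lam n i (i + 1) * UVB.rho n i = UVB.lam n (i + 1) i ∧
         UVB.rho n i * UVB.lam n (i + 1) i * UVB.rho n i = UVB.lam n i (i + 1)) ∧
        (i < j - 1 →
         UVB.rho n i * UVB.lam n i j * UVB.rho n i = UVB.lam n (i + 1) j ∧
         UVB.rho n i * UVB.lam n j i * UVB.rho n i = UVB.lam n j (i + 1))) ∧
    (∀ i j : ℕ, 1 ≤ i → i + 1 < j → j ≤ n →
        UVB.rho n (j - 1) * UVB.lam n i j * UVB.rho n (j - 1) = UVB.lam n i (j - 1) ∧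
        UVB.rho n (j - 1) * UVB.lam n j i * UVB.rho n (j - 1) = UVB.lam n (j - 1) i) ∧
    (∀ i j : ℕ, 1 ≤ i → i < j → j < n →
        UVB.rho n j * UVB.lam n i j * UVB.rho n j = UVB.lam n i (j + 1) ∧
        UVB.rho n j * UVB.lam n j i * UVB.rho n j = UVB.lam n (j + 1) i) :=
  statement4_general n
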